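/- Let G = ⟨f₁,…,f_k⟩ be a finitely generated Möbius semigroup with J_ker(G) = ∅ and J(G) ≠ ∅. Then J(G) contains at least three points. -/

import Mathlib

open MeasureTheory Topology Filter Set

noncomputable section

instance : MeasurableSpace (OnePoint ℂ) := borel _
instance : BorelSpace (OnePoint ℂ) := ⟨rfl⟩

/-- `f` is a Möbius map: a self-homeomorphism of the Riemann sphere extending
`z ↦ (az+b)/(cz+d)` with `ad - bc ≠ 0`. -/
def IsMobius (f : OnePoint ℂ → OnePoint ℂ) : Prop :=
  IsHomeomorph f ∧ ∃ a b c d : ℂ, a * d - b * c ≠ 0 ∧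
    ∀ z : ℂ, c * z + d ≠ 0 → f (z : OnePoint ℂ) = (((a * z + b) / (c * z + d) : ℂ) : OnePoint ℂ)

/-- The semigroup generated by `f 0, …, f (k-1)`: all finite compositions. -/
def genSemigroup {k : ℕ} (f : Fin k → OnePoint ℂ → OnePoint ℂ) :
    Set (OnePoint ℂ → OnePoint ℂ) :=
  { g | ∃ l : List (Fin k), l ≠ [] ∧ g = l.foldr (fun i h => f i ∘ h) id }

/-- The Fatou set of a family `G` of self-maps of the sphere: points having an open
neighborhood on which `G` is equicontinuous (w.r.t. the unique uniformity compatible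
with the compact Hausdorff topology). -/
def fatouSet (G : Set (OnePoint ℂ → OnePoint ℂ)) : Set (OnePoint ℂ) :=
  letI : UniformSpace (OnePoint ℂ) := uniformSpaceOfCompactR1
  { z | ∃ U : Set (OnePoint ℂ), IsOpen U ∧ z ∈ U ∧
      EquicontinuousOn (fun g : G => (g : OnePoint ℂ → OnePoint ℂ)) U }

/-- The Julia set: complement of the Fatou set. -/
def juliaSet (G : Set (OnePoint ℂ → OnePoint ℂ)) : Set (OnePoint ℂ) :=
  (fatouSet G)ᶜ

/-- The kernel Julia set `⋂_{g ∈ G} g⁻¹(J(G))`. -/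
def kernelJulia (G : Set (OnePoint ℂ → OnePoint ℂ)) : Set (OnePoint ℂ) :=
  ⋂ g ∈ G, g ⁻¹' (juliaSet G)

/-- The exceptional set: points whose backward orbit `⋃_{g ∈ G} g⁻¹({z})` is finite. -/
def excSet (G : Set (OnePoint ℂ → OnePoint ℂ)) : Set (OnePoint ℂ) :=
  { z | Set.Finite { w | ∃ g ∈ G, g w = z } }

/-- The random backward orbit: `bwdPt finv a ω 0 = a` and
`bwdPt finv a ω (n+1) = f_{ω n}⁻¹ (bwdPt finv a ω n)`, i.e. `z_{i₁,…,i_n}` where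
`i_{m+1} = ω m`. -/
def bwdPt {k : ℕ} (finv : Fin k → OnePoint ℂ → OnePoint ℂ) (a : OnePoint ℂ)
    (ω : ℕ → Fin k) : ℕ → OnePoint ℂ
  | 0 => a
  | n + 1 => finv (ω n) (bwdPt finv a ω n)

/-- `z_{i₁,…,i_n} = f_{i_n}⁻¹∘⋯∘f_{i₁}⁻¹(a)` for a finite word `w = (i₁,…,i_n)`. -/
def wordPt {k : ℕ} (finv : Fin k → OnePoint ℂ → OnePoint ℂ) (a : OnePoint ℂ)
    {n : ℕ} (w : Fin n → Fin k) : OnePoint ℂ :=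
  (List.ofFn w).foldl (fun x i => finv i x) a

/-- The measure `μ_n^{a,b} = ∑_{i₁,…,i_n} b_{i₁}⋯b_{i_n} δ_{z_{i₁,…,i_n}}`. -/
def muN {k : ℕ} (finv : Fin k → OnePoint ℂ → OnePoint ℂ) (b : Fin k → NNReal)
    (a : OnePoint ℂ) (n : ℕ) : Measure (OnePoint ℂ) :=
  ∑ w : Fin n → Fin k, (∏ j, (b (w j) : ENNReal)) • Measure.dirac (wordPt finv a w)

/-- Weak convergence of a sequence of Borel measures. -/
def WeakTendsto (ρ : ℕ → Measure (OnePoint ℂ)) (μ : Measure (OnePoint ℂ)) : Prop :=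
  ∀ φ : OnePoint ℂ → ℝ, Continuous φ →
    Tendsto (fun n => ∫ x, φ x ∂(ρ n)) atTop (𝓝 (∫ x, φ x ∂μ))

/-- `ρ` is invariant under the adjoint `T_b^*` of the transition operator
`(Tφ)(z) = ∑_j b_j φ(f_j⁻¹ z)`, i.e. `∫ Tφ dρ = ∫ φ dρ` for all continuous `φ`. -/
def TStarInvariant {k : ℕ} (finv : Fin k → OnePoint ℂ → OnePoint ℂ) (b : Fin k → NNReal)
    (ρ : Measure (OnePoint ℂ)) : Prop :=
  ∀ φ : OnePoint ℂ → ℝ, Continuous φ →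
    ∫ z, (∑ j, (b j : ℝ) * φ (finv j z)) ∂ρ = ∫ z, φ z ∂ρ

/-- The (topological) support of a Borel measure: the smallest closed set of full
measure, i.e. the set of points all of whose open neighborhoods have positive measure. -/
def measSupport (μ : Measure (OnePoint ℂ)) : Set (OnePoint ℂ) :=
  { x | ∀ U : Set (OnePoint ℂ), IsOpen U → x ∈ U → 0 < μ U }

/-- `P` is the Bernoulli product measure `P_b` on `Σ_k^+ = ∏_{n=1}^∞ {1,…,k}`. -/
def IsBernoulli {k : ℕ} (b : Fin k → NNReal) (P : Measure (ℕ → Fin k)) : Prop :=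
  IsProbabilityMeasure P ∧ ∀ (m : ℕ) (j : Fin m → Fin k),
    P { ω | ∀ i : Fin m, ω i = j i } = ∏ i, (b (j i) : ENNReal)

/-- A minimal set of `G`: a nonempty compact set `L` with
`closure {g z : g ∈ G} = L` for every `z ∈ L`. -/
def IsMinimalSet (G : Set (OnePoint ℂ → OnePoint ℂ)) (L : Set (OnePoint ℂ)) : Prop :=
  L.Nonempty ∧ IsCompact L ∧ ∀ z ∈ L, closure { w | ∃ g ∈ G, g z = w } = L

/-- `z₀` is an attracting fixed point of `g`: `g z₀ = z₀` and the iterates `g^n`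
converge uniformly to the constant `z₀` on some open neighborhood of `z₀`. -/
def IsAttractingFixedPt (g : OnePoint ℂ → OnePoint ℂ) (z₀ : OnePoint ℂ) : Prop :=
  letI : UniformSpace (OnePoint ℂ) := uniformSpaceOfCompactR1
  g z₀ = z₀ ∧ ∃ U : Set (OnePoint ℂ), IsOpen U ∧ z₀ ∈ U ∧
    TendstoUniformlyOn (fun n => g^[n]) (fun _ => z₀) atTop U
/-- The empirical measure `μ^a_{i₁,…,i_n} = (1/n) ∑_{j=1}^n δ_{z_{i₁,…,i_j}}`. -/
def empMeas {k : ℕ} (finv : Fin k → OnePoint ℂ → OnePoint ℂ) (a : OnePoint ℂ)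
    (ω : ℕ → Fin k) (n : ℕ) : Measure (OnePoint ℂ) :=
  (n : ENNReal)⁻¹ • ∑ j ∈ Finset.range n, Measure.dirac (bwdPt finv a ω (j + 1))

/- The Julia set is backward invariant, so if it is finite each `g ∈ G`, being a bijection,
permutes it: `g⁻¹(J) = J`. Then `J_ker(G) = J(G)`, contradicting `J_ker(G) = ∅ ≠ J(G)`. -/

lemma Set.Finite.preimage_eq_of_preimage_subset {α : Type*} {s : Set α} {g : α → α}
    (hs : s.Finite) (hg : g.Bijective) (hgs : g ⁻¹' s ⊆ s) : g ⁻¹' s = s :=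
  hs.eq_of_subset_of_encard_le' hgs (encard_preimage_of_bijective hg s).ge

section GenSemigroup

variable {k : ℕ} {f : Fin k → OnePoint ℂ → OnePoint ℂ}

lemma apply_mem_genSemigroup (j : Fin k) : f j ∈ genSemigroup f :=
  ⟨[j], List.cons_ne_nil j [], rfl⟩

lemma comp_mem_genSemigroup {g h : OnePoint ℂ → OnePoint ℂ}
    (hg : g ∈ genSemigroup f) (hh : h ∈ genSemigroup f) : g ∘ h ∈ genSemigroup f := by
  obtain ⟨l₁, hl₁, rfl⟩ := hg
  obtain ⟨l₂, -, rfl⟩ := hh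
  refine ⟨l₁ ++ l₂, by simp [hl₁], ?_⟩
  clear hl₁
  induction l₁ with
  | nil => rfl
  | cons i l ih => simp only [List.foldr_cons, List.cons_append, ← ih]; rfl

lemma isHomeomorph_of_mem_genSemigroup (hf : ∀ j, IsHomeomorph (f j))
    {g : OnePoint ℂ → OnePoint ℂ} (hg : g ∈ genSemigroup f) : IsHomeomorph g := by
  obtain ⟨l, -, rfl⟩ := hg
  induction l with
  | nil => exact IsHomeomorph.id
  | cons i l ih => exact (hf i).comp ih

end GenSemigroup

section FatouJulia

variable {G : Set (OnePoint ℂ → OnePoint ℂ)} {g : OnePoint ℂ → OnePoint ℂ}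

/-- Equicontinuity of `G` on `U` transports to `g '' U` because `{h ∘ g : h ∈ G} ⊆ G`. -/
lemma mapsTo_fatouSet (hg : IsHomeomorph g) (hG : ∀ h ∈ G, h ∘ g ∈ G) :
    MapsTo g (fatouSet G) (fatouSet G) := by
  let _ : UniformSpace (OnePoint ℂ) := uniformSpaceOfCompactR1
  rintro z ⟨U, hU, hzU, hequi⟩
  refine ⟨g '' U, hg.isOpenMap U hU, mem_image_of_mem g hzU, ?_⟩
  rintro _ ⟨x, hxU, rfl⟩ V hV
  have hx := hequi x hxU V hV
  rw [← hg.isEmbedding.map_nhdsWithin_eq U x, eventually_map]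
  filter_upwards [hx] with x' hx' h
  exact hx' ⟨h.1 ∘ g, hG h.1 h.2⟩

lemma preimage_juliaSet_subset (hg : IsHomeomorph g) (hG : ∀ h ∈ G, h ∘ g ∈ G) :
    g ⁻¹' juliaSet G ⊆ juliaSet G := by
  rw [juliaSet, preimage_compl, compl_subset_compl]
  exact mapsTo_fatouSet hg hG

lemma kernelJulia_eq_juliaSet (hG : G.Nonempty)
    (hinv : ∀ g ∈ G, g ⁻¹' juliaSet G = juliaSet G) : kernelJulia G = juliaSet G := by
  rw [kernelJulia, iInter₂_congr hinv, biInter_const hG]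

end FatouJulia

/-- **Claim (a): if `J_ker(G) = ∅` and `J(G) ≠ ∅` then `J(G)` has at least three points.** -/
theorem julia_three_points {k : ℕ} (hk : 0 < k)
    (f : Fin k → OnePoint ℂ → OnePoint ℂ) (hmob : ∀ j, IsMobius (f j))
    (hker : kernelJulia (genSemigroup f) = ∅)
    (hJ : juliaSet (genSemigroup f) ≠ ∅) :
    3 ≤ (juliaSet (genSemigroup f)).encard := by
  by_contra hlt
  have hfin : (juliaSet (genSemigroup f)).Finite :=
    encard_ne_top_iff.mp (ne_top_of_lt (not_le.mp hlt))
  have hhomeo : ∀ g ∈ genSemigroup f, IsHomeomorph g :=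
    fun _ ↦ isHomeomorph_of_mem_genSemigroup fun j ↦ (hmob j).1
  have hinv : ∀ g ∈ genSemigroup f,
      g ⁻¹' juliaSet (genSemigroup f) = juliaSet (genSemigroup f) :=
    fun g hg ↦ hfin.preimage_eq_of_preimage_subset (hhomeo g hg).bijective
      (preimage_juliaSet_subset (hhomeo g hg) fun h hh ↦ comp_mem_genSemigroup hh hg)
  rw [kernelJulia_eq_juliaSet ⟨_, apply_mem_genSemigroup ⟨0, hk⟩⟩ hinv] at hker
  exact hJ hker
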